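/- arXiv:1707.04615 — 3 statements merged into one kernel-verified Lean document; each statement's English description precedes it below -/
import Mathlib

section
/- Let φ: ℝ → ℝ be periodic with period θ > 0, and let D be a probability distribution on ℝ with a unimodal density function f. Then for any z ∈ ℝ, |E_{x∼D}[φ(x) − φ(x−z)]| ≤ C · ‖f‖_∞ · ∫₀^θ |φ(x)| dx for some absolute constant C (e.g., C = 5 works, since the bound 3f(mode) + f(mode+θ) + f(mode−θ) times the integral suffices). -/
/-!
Decompose the unimodal density as `f = f(min x m) + f(max x m) - f(m)`: a nondecreasing part
and a nonincreasing part. Hence, for `z ≥ 0`, `|f x - f (x + z)| ≤ v (x + z) - v x` for the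
monotone function `v = f(min · m) - f(max · m)`, whose total rise is at most `2 f(m)`.
After reducing `z` into `[0, θ)` and moving the shift from `φ` to the density, the expectation
becomes `∫ φ x (f x - f (x + z)) dx`, which is bounded by `∫ |φ x| (v (x + θ) - v x) dx`.
Cutting `ℝ` into the periods `[nθ, (n+1)θ)` and folding them onto `[0, θ)`, the weights
`v (x + (n+1)θ) - v (x + nθ)` telescope to at most `2 f(m)`, so the bound holds with `C = 2`.
-/

open MeasureTheory Set Function

section Unimodal

variable {f : ℝ → ℝ} {m : ℝ}

lemma MonotoneOn.monotone_comp_min (hf : MonotoneOn f (Iic m)) : Monotone fun x => f (min x m) :=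
  fun _ _ hxy => hf (mem_Iic.2 (min_le_right _ _)) (mem_Iic.2 (min_le_right _ _))
    (min_le_min_right m hxy)

lemma AntitoneOn.antitone_comp_max (hf : AntitoneOn f (Ici m)) : Antitone fun x => f (max x m) :=
  fun _ _ hxy => hf (mem_Ici.2 (le_max_right _ _)) (mem_Ici.2 (le_max_right _ _))
    (max_le_max_right m hxy)

lemma eq_comp_min_add_comp_max_sub (f : ℝ → ℝ) (m x : ℝ) :
    f x = f (min x m) + f (max x m) - f m := by
  rcases le_total x m with hx | hx <;> simp [hx]

variable (hmono : MonotoneOn f (Iic m)) (hanti : AntitoneOn f (Ici m))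
include hmono hanti

lemma measurable_of_unimodal : Measurable f := by
  rw [funext (eq_comp_min_add_comp_max_sub f m)]
  exact (hmono.monotone_comp_min.measurable.add hanti.antitone_comp_max.measurable).sub_const _

lemma le_apply_mode_of_unimodal (x : ℝ) : f x ≤ f m := by
  rw [eq_comp_min_add_comp_max_sub f m x]
  linarith [hmono (mem_Iic.2 (min_le_right x m)) self_mem_Iic (min_le_right x m),
    hanti self_mem_Ici (mem_Ici.2 (le_max_right x m)) (le_max_right x m)]

lemma exists_monotone_abs_sub_le_of_unimodal (hf0 : ∀ x, 0 ≤ f x) :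
    ∃ v : ℝ → ℝ, Monotone v ∧ (∀ x, |v x| ≤ f m) ∧ ∀ ⦃x y⦄, x ≤ y → |f x - f y| ≤ v y - v x := by
  refine ⟨fun x => f (min x m) - f (max x m),
    fun _ _ hxy => sub_le_sub (hmono.monotone_comp_min hxy) (hanti.antitone_comp_max hxy),
    fun x => ?_, fun x y hxy => ?_⟩
  · have hle := le_apply_mode_of_unimodal hmono hanti
    rw [abs_le]
    constructor <;> linarith [hle (min x m), hle (max x m), hf0 (min x m), hf0 (max x m)]
  · have hmin := hmono.monotone_comp_min hxy
    have hmax := hanti.antitone_comp_max hxy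
    rw [eq_comp_min_add_comp_max_sub f m x, eq_comp_min_add_comp_max_sub f m y, abs_le]
    constructor <;> linarith

end Unimodal

lemma tsum_ofReal_sub_le_of_monotone {a : ℤ → ℝ} {c : ℝ} (ha : Monotone a) (hc : ∀ n, |a n| ≤ c) :
    ∑' n, ENNReal.ofReal (a (n + 1) - a n) ≤ ENNReal.ofReal (2 * c) := by
  rw [ENNReal.tsum_eq_iSup_sum]
  refine iSup_le fun s => ?_
  set N := s.sup Int.natAbs
  have hs : s ⊆ Finset.Ico (-(N + 1 : ℕ) : ℤ) (N + 1 : ℕ) := fun n hn => by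
    have hnN := Finset.le_sup (f := Int.natAbs) hn
    rw [Finset.mem_Ico]
    omega
  have hstep : ∀ n, 0 ≤ a (n + 1) - a n := fun n => sub_nonneg.2 (ha (by omega))
  calc ∑ n ∈ s, ENNReal.ofReal (a (n + 1) - a n)
      ≤ ∑ n ∈ Finset.Ico (-(N + 1 : ℕ) : ℤ) (N + 1 : ℕ), ENNReal.ofReal (a (n + 1) - a n) :=
        Finset.sum_le_sum_of_subset hs
    _ = ENNReal.ofReal (a (N + 1 : ℕ) - a (-(N + 1 : ℕ))) := by
        rw [← ENNReal.ofReal_sum_of_nonneg fun n _ => hstep n]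
        congr 1
        simpa only [neg_sub_neg] using Finset.sum_Ico_int_sub (N + 1) (fun n => -a n)
    _ ≤ ENNReal.ofReal (2 * c) := by
        gcongr
        linarith [(abs_le.1 (hc (N + 1 : ℕ))).2, (abs_le.1 (hc (-(N + 1 : ℕ)))).1]

lemma lintegral_mul_ofReal_sub_le_of_periodic {F : ℝ → ENNReal} {v : ℝ → ℝ} {θ c : ℝ}
    (hθ : 0 < θ) (hF : Periodic F θ) (hFm : AEMeasurable F (volume.restrict (Ico 0 θ)))
    (hv : Monotone v) (hvc : ∀ x, |v x| ≤ c) :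
    ∫⁻ x, F x * ENNReal.ofReal (v (x + θ) - v x) ≤
      ENNReal.ofReal (2 * c) * ∫⁻ x in Ico 0 θ, F x := by
  have hcell : ∀ n : ℤ, Ico (n • θ) ((n + 1) • θ) = (· + n • θ) '' Ico 0 θ := fun n => by
    rw [image_add_const_Ico, zero_add, add_smul, one_smul, add_comm]
  have hv_orbit : ∀ x, Monotone fun n : ℤ => v (x + n • θ) := fun x _ _ hpq =>
    hv (add_le_add_right (zsmul_le_zsmul_left hθ.le hpq) x)
  have hv_meas := hv.measurable
  calc ∫⁻ x, F x * ENNReal.ofReal (v (x + θ) - v x)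
      = ∑' n : ℤ, ∫⁻ x in Ico (n • θ) ((n + 1) • θ), F x * ENNReal.ofReal (v (x + θ) - v x) := by
        rw [← lintegral_iUnion (fun _ => measurableSet_Ico) (pairwise_disjoint_Ico_zsmul θ),
          iUnion_Ico_zsmul hθ, Measure.restrict_univ]
    _ = ∑' n : ℤ, ∫⁻ x in Ico 0 θ,
          F x * ENNReal.ofReal (v (x + (n + 1) • θ) - v (x + n • θ)) := by
        refine tsum_congr fun n => ?_
        rw [hcell, ← (measurePreserving_add_right volume (n • θ)).setLIntegral_comp_emb
          (measurableEmbedding_addRight _)]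
        simp only [hF.zsmul n _, add_smul, one_smul, add_assoc]
    _ = ∫⁻ x in Ico 0 θ, F x *
          ∑' n : ℤ, ENNReal.ofReal (v (x + (n + 1) • θ) - v (x + n • θ)) := by
        simp_rw [← ENNReal.tsum_mul_left]
        exact (lintegral_tsum fun n => hFm.mul (Measurable.aemeasurable (by fun_prop))).symm
    _ ≤ ∫⁻ x in Ico 0 θ, F x * ENNReal.ofReal (2 * c) := by
        gcongr with x
        exact tsum_ofReal_sub_le_of_monotone (hv_orbit x) fun n => hvc _
    _ = ENNReal.ofReal (2 * c) * ∫⁻ x in Ico 0 θ, F x := by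
        rw [lintegral_mul_const' _ _ ENNReal.ofReal_ne_top, mul_comm]

lemma abs_integral_mul_sub_comp_add_le_of_unimodal {φ f : ℝ → ℝ} {θ z m : ℝ} (hθ : 0 < θ)
    (hφ : Periodic φ θ) (hφθ : IntegrableOn φ (Icc 0 θ)) (hmono : MonotoneOn f (Iic m))
    (hanti : AntitoneOn f (Ici m)) (hf0 : ∀ x, 0 ≤ f x) (hz0 : 0 ≤ z) (hzθ : z ≤ θ) :
    |∫ x, φ x * (f x - f (x + z))| ≤ 2 * f m * ∫ x in Icc 0 θ, |φ x| := by
  obtain ⟨v, hv, hvm, hfv⟩ := exists_monotone_abs_sub_le_of_unimodal hmono hanti hf0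
  have hpoint : ∀ x, ‖φ x * (f x - f (x + z))‖ₑ ≤ ‖φ x‖ₑ * ENNReal.ofReal (v (x + θ) - v x) :=
    fun x => by
      rw [enorm_mul, Real.enorm_eq_ofReal_abs (f x - f _)]
      gcongr
      exact (hfv (by linarith)).trans (by linarith [hv (by linarith : x + z ≤ x + θ)])
  have hperiod : ∫⁻ x in Ico 0 θ, ‖φ x‖ₑ ≤ ENNReal.ofReal (∫ x in Icc 0 θ, |φ x|) := by
    simp_rw [← Real.norm_eq_abs, ofReal_integral_norm_eq_lintegral_enorm hφθ]
    exact lintegral_mono_set Ico_subset_Icc_self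
  have hfm : 0 ≤ f m := hf0 m
  rw [← ENNReal.ofReal_le_ofReal_iff (by positivity), ← Real.enorm_eq_ofReal_abs]
  calc ‖∫ x, φ x * (f x - f (x + z))‖ₑ
      ≤ ∫⁻ x, ‖φ x * (f x - f (x + z))‖ₑ := enorm_integral_le_lintegral_enorm _
    _ ≤ ∫⁻ x, ‖φ x‖ₑ * ENNReal.ofReal (v (x + θ) - v x) := lintegral_mono hpoint
    _ ≤ ENNReal.ofReal (2 * f m) * ∫⁻ x in Ico 0 θ, ‖φ x‖ₑ :=
        lintegral_mul_ofReal_sub_le_of_periodic hθ (fun x => congrArg enorm (hφ x))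
          (hφθ.mono_set Ico_subset_Icc_self).aestronglyMeasurable.enorm hv hvm
    _ ≤ ENNReal.ofReal (2 * f m) * ENNReal.ofReal (∫ x in Icc 0 θ, |φ x|) := by gcongr
    _ = ENNReal.ofReal (2 * f m * ∫ x in Icc 0 θ, |φ x|) := (ENNReal.ofReal_mul (by positivity)).symm

lemma integral_sub_comp_sub_withDensity {f φ : ℝ → ℝ} {z : ℝ} (hf : Measurable f)
    (hf0 : ∀ x, 0 ≤ f x)
    (hφ : Integrable φ (volume.withDensity fun x => ENNReal.ofReal (f x)))
    (hφz : Integrable (fun x => φ (x - z)) (volume.withDensity fun x => ENNReal.ofReal (f x))) :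
    ∫ x, (φ x - φ (x - z)) ∂volume.withDensity (fun x => ENNReal.ofReal (f x)) =
      ∫ x, φ x * (f x - f (x + z)) := by
  have hfin : ∀ᵐ x ∂volume, ENNReal.ofReal (f x) < ⊤ := ae_of_all _ fun _ => ENNReal.ofReal_lt_top
  simp only [integrable_withDensity_iff_integrable_smul' hf.ennreal_ofReal hfin,
    ENNReal.toReal_ofReal (hf0 _), smul_eq_mul] at hφ hφz
  have hφz' : Integrable fun x => f (x + z) * φ x := by
    simpa only [add_sub_cancel_right] using hφz.comp_add_right z
  rw [integral_withDensity_eq_integral_toReal_smul hf.ennreal_ofReal hfin]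
  simp only [ENNReal.toReal_ofReal (hf0 _), smul_eq_mul, mul_sub]
  rw [integral_sub hφ hφz, ← integral_add_right_eq_self (fun x => f x * φ (x - z)) z]
  simp only [add_sub_cancel_right]
  rw [← integral_sub hφ hφz']
  congr 1 with x
  ring

lemma Function.Periodic.exists_mem_Ico_comp_sub_eq {G α : Type*} [AddCommGroup G] [LinearOrder G]
    [IsOrderedAddMonoid G] [Archimedean G] {φ : G → α} {θ : G} (hφ : Periodic φ θ) (hθ : 0 < θ)
    (z : G) : ∃ z' ∈ Ico 0 θ, ∀ x, φ (x - z) = φ (x - z') :=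
  ⟨toIcoMod hθ 0 z, toIcoMod_mem_Ico' hθ z, fun x => by
    rw [← hφ.sub_zsmul_eq (toIcoDiv hθ 0 z) (x := x - toIcoMod hθ 0 z),
      ← self_sub_toIcoMod hθ 0 z, sub_sub_sub_cancel_right]⟩

/-- Shift lemma for periodic functions against unimodal densities. -/
theorem stmt_0 :
    ∃ C > (0:ℝ), ∀ (φ f : ℝ → ℝ) (θ z B : ℝ),
      0 < θ →
      Function.Periodic φ θ →
      (∃ m : ℝ, MonotoneOn f (Iic m) ∧ AntitoneOn f (Ici m)) →
      (∀ x, 0 ≤ f x) →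
      (∀ x, f x ≤ B) →
      ∀ μ : Measure ℝ,
        μ = volume.withDensity (fun x => ENNReal.ofReal (f x)) →
        IsProbabilityMeasure μ →
        Integrable φ μ →
        Integrable (fun x => φ (x - z)) μ →
        IntegrableOn φ (Icc 0 θ) volume →
        |∫ x, (φ x - φ (x - z)) ∂μ| ≤ C * B * ∫ x in Icc 0 θ, |φ x| := by
  refine ⟨2, two_pos, ?_⟩
  rintro φ f θ z B hθ hφ ⟨m, hmono, hanti⟩ hf0 hfB μ rfl - hint hint_shift hint_period
  obtain ⟨z', ⟨hz'0, hz'θ⟩, hz'⟩ := hφ.exists_mem_Ico_comp_sub_eq hθ z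
  simp only [hz'] at hint_shift ⊢
  rw [integral_sub_comp_sub_withDensity (measurable_of_unimodal hmono hanti) hf0 hint hint_shift]
  calc |∫ x, φ x * (f x - f (x + z'))| ≤ 2 * f m * ∫ x in Icc 0 θ, |φ x| :=
        abs_integral_mul_sub_comp_add_le_of_unimodal hθ hφ hint_period hmono hanti hf0 hz'0 hz'θ.le
    _ ≤ 2 * B * ∫ x in Icc 0 θ, |φ x| := by
        gcongr
        exact hfB m
end

section
/- Let ψ ∈ L¹(ℝ) with ∫_{−r}^{r} |ψ| ≥ (5/6)‖ψ‖₁ for some r > 0 (essential radius at most r). Set θ = 4r and F(x) = Σ_{k∈ℤ} ψ(x − kθ). Then for any interval I of length θ: ∫_I |F(x)| dx ≤ ‖ψ‖₁; moreover ∫_{−r}^{r} |F(x)| dx ≥ (2/3)‖ψ‖₁ and ∫_{r}^{3r} |F(x)| dx ≤ (1/6)‖ψ‖₁. -/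
/-!
Write `S(x) = ∑ₖ |ψ(x - kθ)|`. The translates of an interval of length `θ` tile `ℝ`, so `S`
integrates to `‖ψ‖₁` over every such interval, and `|F| ≤ S`: this is the first bound.
Since `S ≥ |ψ|`, splitting `[-r, 3r]` at `r` gives `∫_{[r,3r]} |F| ≤ ‖ψ‖₁ - ∫_{[-r,r]} |ψ|`.
Isolating the term `k = 0` of the series gives `2|ψ| ≤ |F| + S` pointwise, hence
`2 ∫_{[-r,r]} |ψ| ≤ ∫_{[-r,r]} |F| + ‖ψ‖₁`. Both combine with `∫_{[-r,r]} |ψ| ≥ (5/6)‖ψ‖₁`.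
-/

open MeasureTheory Set Filter Topology
open scoped ENNReal

/-- `F_{f,θ}`. Where the series does not converge, `tsum` gives `0`; for integrable `f` this
happens only on a null set (`ae_summable_norm_periodization`). -/
noncomputable def periodization {E : Type*} [AddCommMonoid E] [TopologicalSpace E]
    (θ : ℝ) (f : ℝ → E) (x : ℝ) : E :=
  ∑' k : ℤ, f (x - k * θ)

theorem two_mul_enorm_le_enorm_tsum_add_tsum_enorm {ι E : Type*} [NormedAddCommGroup E]
    [CompleteSpace E] (u : ι → E) (i : ι) :
    2 * ‖u i‖ₑ ≤ ‖∑' k, u k‖ₑ + ∑' k, ‖u k‖ₑ := by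
  classical
  by_cases htop : ∑' k, ‖u k‖ₑ = ∞
  · simp [htop]
  set v : ι → E := fun k => if k = i then 0 else u k
  have hu : Summable u := (tsum_enorm_ne_top_iff_summable_norm.1 htop).of_norm
  have hnorm : ∑' k, ‖u k‖ₑ = ‖u i‖ₑ + ∑' k, ‖v k‖ₑ := by
    rw [ENNReal.tsum_eq_add_tsum_ite i]
    exact congrArg _ (tsum_congr fun k => by split_ifs <;> simp [v, *])
  have hui : ‖u i‖ₑ ≤ ‖∑' k, u k‖ₑ + ∑' k, ‖v k‖ₑ :=
    calc ‖u i‖ₑ = ‖∑' k, u k - ∑' k, v k‖ₑ := by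
          rw [hu.tsum_eq_add_tsum_ite i, add_sub_cancel_right]
      _ ≤ ‖∑' k, u k‖ₑ + ‖∑' k, v k‖ₑ := enorm_sub_le
      _ ≤ ‖∑' k, u k‖ₑ + ∑' k, ‖v k‖ₑ := by gcongr; exact enorm_tsum_le_tsum_enorm
  calc 2 * ‖u i‖ₑ = ‖u i‖ₑ + ‖u i‖ₑ := two_mul _
    _ ≤ ‖∑' k, u k‖ₑ + ∑' k, ‖v k‖ₑ + ‖u i‖ₑ := by gcongr
    _ = ‖∑' k, u k‖ₑ + ∑' k, ‖u k‖ₑ := by rw [hnorm, add_assoc, add_comm (‖u i‖ₑ)]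

theorem setLIntegral_Icc_comp_sub_right (g : ℝ → ℝ≥0∞) (c a b : ℝ) :
    ∫⁻ x in Icc a b, g (x - c) = ∫⁻ x in Icc (a - c) (b - c), g x := by
  rw [← image_sub_const_Icc]
  exact ((measurePreserving_sub_right volume c).setLIntegral_comp_emb
    (MeasurableEquiv.subRight c).measurableEmbedding g (Icc a b))

section lintegral

variable {g : ℝ → ℝ≥0∞} {θ : ℝ}

theorem le_periodization (g : ℝ → ℝ≥0∞) (θ x : ℝ) : g x ≤ periodization θ g x := by
  simpa [periodization] using ENNReal.le_tsum (f := fun k : ℤ => g (x - k * θ)) 0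

theorem AEMeasurable.periodization (hg : AEMeasurable g) (θ : ℝ) :
    AEMeasurable (periodization θ g) :=
  AEMeasurable.tsum fun k : ℤ => hg.comp_quasiMeasurePreserving
    (measurePreserving_sub_right volume ((k : ℝ) * θ)).quasiMeasurePreserving

theorem setLIntegral_periodization_Icc (hg : AEMeasurable g) (θ a b : ℝ) :
    ∫⁻ x in Icc a b, periodization θ g x
      = ∑' k : ℤ, ∫⁻ x in Icc (a - k * θ) (b - k * θ), g x := by
  simp only [periodization]
  rw [lintegral_tsum (f := fun (k : ℤ) x => g (x - k * θ)) fun k => (hg.comp_quasiMeasurePreserving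
    (measurePreserving_sub_right volume ((k : ℝ) * θ)).quasiMeasurePreserving).restrict]
  exact tsum_congr fun k => setLIntegral_Icc_comp_sub_right g _ a b

theorem setLIntegral_periodization_Icc_add_period (hg : AEMeasurable g) (hθ : 0 < θ) (a : ℝ) :
    ∫⁻ x in Icc a (a + θ), periodization θ g x = ∫⁻ x, g x := by
  rw [setLIntegral_periodization_Icc hg, ← (Equiv.neg ℤ).tsum_eq]
  have hIoc (k : ℤ) : Icc (a - (-k : ℤ) * θ) (a + θ - (-k : ℤ) * θ) =ᵐ[volume]
      Ioc (a + k • θ) (a + (k + 1) • θ) := by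
    have : Icc (a - (-k : ℤ) * θ) (a + θ - (-k : ℤ) * θ) = Icc (a + k • θ) (a + (k + 1) • θ) := by
      simp only [zsmul_eq_mul]; push_cast; ring_nf
    exact this ▸ Ioc_ae_eq_Icc.symm
  simp_rw [Equiv.neg_apply, Measure.restrict_congr_set (hIoc _)]
  rw [← lintegral_iUnion (fun k => measurableSet_Ioc) (pairwise_disjoint_Ioc_add_zsmul a θ),
    iUnion_Ioc_add_zsmul hθ a, Measure.restrict_univ]

end lintegral

section normed

variable {E : Type*} [NormedAddCommGroup E] {f : ℝ → E} {θ a b : ℝ}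

theorem enorm_periodization_le (f : ℝ → E) (θ x : ℝ) :
    ‖periodization θ f x‖ₑ ≤ periodization θ (‖f ·‖ₑ) x :=
  enorm_tsum_le_tsum_enorm

theorem setLIntegral_enorm_periodization_le (hf : AEStronglyMeasurable f) (hθ : 0 < θ)
    (hb : b ≤ a + θ) :
    ∫⁻ x in Icc a b, ‖periodization θ f x‖ₑ ≤ ∫⁻ x, ‖f x‖ₑ :=
  calc ∫⁻ x in Icc a b, ‖periodization θ f x‖ₑ
      ≤ ∫⁻ x in Icc a (a + θ), periodization θ (‖f ·‖ₑ) x :=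
        (lintegral_mono fun x => enorm_periodization_le f θ x).trans
          (lintegral_mono_set (Icc_subset_Icc le_rfl hb))
    _ = ∫⁻ x, ‖f x‖ₑ := setLIntegral_periodization_Icc_add_period hf.enorm hθ a

theorem setLIntegral_enorm_periodization_add_le (hf : AEStronglyMeasurable f) (hθ : 0 < θ)
    (hab : a ≤ b) (hb : b ≤ a + θ) :
    (∫⁻ x in Icc b (a + θ), ‖periodization θ f x‖ₑ) + ∫⁻ x in Icc a b, ‖f x‖ₑ
      ≤ ∫⁻ x, ‖f x‖ₑ :=
  calc (∫⁻ x in Icc b (a + θ), ‖periodization θ f x‖ₑ) + ∫⁻ x in Icc a b, ‖f x‖ₑ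
      ≤ (∫⁻ x in Ioc b (a + θ), periodization θ (‖f ·‖ₑ) x)
          + ∫⁻ x in Icc a b, periodization θ (‖f ·‖ₑ) x := by
        rw [Measure.restrict_congr_set Ioc_ae_eq_Icc.symm]
        gcongr with x x
        · exact enorm_periodization_le f θ x
        · exact le_periodization _ θ x
    _ = ∫⁻ x in Icc a (a + θ), periodization θ (‖f ·‖ₑ) x := by
        rw [← Icc_union_Ioc_eq_Icc hab hb, lintegral_union measurableSet_Ioc
          ((Iic_disjoint_Ioc le_rfl).mono_left Icc_subset_Iic_self), add_comm]
    _ = ∫⁻ x, ‖f x‖ₑ := setLIntegral_periodization_Icc_add_period hf.enorm hθ a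

theorem ae_summable_norm_periodization (hf : Integrable f) (hθ : 0 < θ) (a : ℝ) :
    ∀ᵐ x ∂volume.restrict (Icc a (a + θ)), Summable fun k : ℤ => ‖f (x - k * θ)‖ := by
  have hfin : ∫⁻ x in Icc a (a + θ), periodization θ (‖f ·‖ₑ) x ≠ ∞ := by
    rw [setLIntegral_periodization_Icc_add_period hf.aestronglyMeasurable.enorm hθ a]
    exact hf.2.ne
  filter_upwards [ae_lt_top' (hf.aestronglyMeasurable.enorm.periodization θ).restrict hfin]
    with x hx using tsum_enorm_ne_top_iff_summable_norm.1 hx.ne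

variable [CompleteSpace E]

theorem two_mul_enorm_le_enorm_periodization_add (f : ℝ → E) (θ x : ℝ) :
    2 * ‖f x‖ₑ ≤ ‖periodization θ f x‖ₑ + periodization θ (‖f ·‖ₑ) x := by
  simpa [periodization] using
    two_mul_enorm_le_enorm_tsum_add_tsum_enorm (fun k : ℤ => f (x - k * θ)) 0

theorem two_mul_setLIntegral_enorm_le (hf : AEStronglyMeasurable f)
    (hθ : 0 < θ) (hb : b ≤ a + θ) :
    2 * ∫⁻ x in Icc a b, ‖f x‖ₑ ≤ (∫⁻ x in Icc a b, ‖periodization θ f x‖ₑ) + ∫⁻ x, ‖f x‖ₑ :=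
  calc 2 * ∫⁻ x in Icc a b, ‖f x‖ₑ
      = ∫⁻ x in Icc a b, 2 * ‖f x‖ₑ := (lintegral_const_mul' _ _ (by norm_num)).symm
    _ ≤ ∫⁻ x in Icc a b, (‖periodization θ f x‖ₑ + periodization θ (‖f ·‖ₑ) x) :=
        lintegral_mono fun x => two_mul_enorm_le_enorm_periodization_add f θ x
    _ = (∫⁻ x in Icc a b, ‖periodization θ f x‖ₑ)
          + ∫⁻ x in Icc a b, periodization θ (‖f ·‖ₑ) x :=
        lintegral_add_right' _ (hf.enorm.periodization θ).restrict
    _ ≤ (∫⁻ x in Icc a b, ‖periodization θ f x‖ₑ) + ∫⁻ x, ‖f x‖ₑ := by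
        rw [← setLIntegral_periodization_Icc_add_period hf.enorm hθ a]
        gcongr 1
        exact lintegral_mono_set (Icc_subset_Icc le_rfl hb)

theorem aestronglyMeasurable_periodization (hf : Integrable f) (hθ : 0 < θ) (a : ℝ) :
    AEStronglyMeasurable (periodization θ f) (volume.restrict (Icc a (a + θ))) := by
  refine aestronglyMeasurable_of_tendsto_ae (u := (atTop : Filter (Finset ℤ)))
    (f := fun s x => ∑ k ∈ s, f (x - k * θ)) (fun s => ?_) ?_
  · refine (Finset.aestronglyMeasurable_fun_sum s fun k _ => ?_).restrict
    exact hf.aestronglyMeasurable.comp_quasiMeasurePreserving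
      (measurePreserving_sub_right volume _).quasiMeasurePreserving
  · filter_upwards [ae_summable_norm_periodization hf hθ a] with x hx
    exact hx.of_norm.hasSum

theorem integral_norm_periodization_eq_toReal (hf : Integrable f) (hθ : 0 < θ) {s : Set ℝ}
    (hs : s ⊆ Icc a (a + θ)) :
    ∫ x in s, ‖periodization θ f x‖ = (∫⁻ x in s, ‖periodization θ f x‖ₑ).toReal :=
  integral_norm_eq_lintegral_enorm ((aestronglyMeasurable_periodization hf hθ a).mono_set hs)

theorem integral_norm_periodization_le (hf : Integrable f) (hθ : 0 < θ) (hb : b ≤ a + θ) :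
    ∫ x in Icc a b, ‖periodization θ f x‖ ≤ ∫ x, ‖f x‖ := by
  rw [integral_norm_periodization_eq_toReal hf hθ (Icc_subset_Icc le_rfl hb),
    integral_norm_eq_lintegral_enorm hf.1]
  exact ENNReal.toReal_mono hf.2.ne (setLIntegral_enorm_periodization_le hf.1 hθ hb)

theorem two_mul_integral_norm_sub_le_integral_norm_periodization (hf : Integrable f)
    (hθ : 0 < θ) (hb : b ≤ a + θ) :
    2 * (∫ x in Icc a b, ‖f x‖) - ∫ x, ‖f x‖ ≤ ∫ x in Icc a b, ‖periodization θ f x‖ := by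
  have hF : ∫⁻ x in Icc a b, ‖periodization θ f x‖ₑ ≠ ∞ :=
    ((setLIntegral_enorm_periodization_le hf.1 hθ hb).trans_lt hf.2).ne
  have h := ENNReal.toReal_mono (ENNReal.add_ne_top.2 ⟨hF, hf.2.ne⟩)
    (two_mul_setLIntegral_enorm_le hf.1 hθ hb)
  rw [ENNReal.toReal_add hF hf.2.ne, ENNReal.toReal_mul, ENNReal.toReal_ofNat] at h
  rw [integral_norm_periodization_eq_toReal hf hθ (Icc_subset_Icc le_rfl hb),
    integral_norm_eq_lintegral_enorm hf.1, integral_norm_eq_lintegral_enorm hf.1.restrict]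
  linarith

theorem integral_norm_periodization_le_sub (hf : Integrable f) (hθ : 0 < θ) (hab : a ≤ b)
    (hb : b ≤ a + θ) :
    ∫ x in Icc b (a + θ), ‖periodization θ f x‖ ≤ (∫ x, ‖f x‖) - ∫ x in Icc a b, ‖f x‖ := by
  have h := setLIntegral_enorm_periodization_add_le hf.1 hθ hab hb
  have hsum := (h.trans_lt hf.2).ne
  rw [ENNReal.add_ne_top] at hsum
  replace h := ENNReal.toReal_mono hf.2.ne h
  rw [ENNReal.toReal_add hsum.1 hsum.2] at h
  rw [integral_norm_periodization_eq_toReal hf hθ (Icc_subset_Icc hab le_rfl),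
    integral_norm_eq_lintegral_enorm hf.1, integral_norm_eq_lintegral_enorm hf.1.restrict]
  linarith

end normed

/-- Mass localization for the (ψ,4r)-periodization of an L¹ function ψ with
essential radius at most r. -/
theorem stmt_4 (ψ : ℝ → ℝ) (hψ : Integrable ψ) (r : ℝ) (hr : 0 < r)
    (hrad : (5/6) * (∫ x, |ψ x|) ≤ ∫ x in Icc (-r) r, |ψ x|) :
    (∀ a : ℝ, (∫ x in Icc a (a + 4*r), |∑' k : ℤ, ψ (x - k * (4*r))|) ≤ ∫ x, |ψ x|) ∧
    ((2/3) * (∫ x, |ψ x|) ≤ ∫ x in Icc (-r) r, |∑' k : ℤ, ψ (x - k * (4*r))|) ∧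
    ((∫ x in Icc r (3*r), |∑' k : ℤ, ψ (x - k * (4*r))|) ≤ (1/6) * ∫ x, |ψ x|) := by
  have hθ : 0 < 4 * r := by positivity
  simp only [← Real.norm_eq_abs] at hrad ⊢
  refine ⟨fun a => integral_norm_periodization_le hψ hθ le_rfl, ?_, ?_⟩
  · have h := two_mul_integral_norm_sub_le_integral_norm_periodization hψ hθ
      (a := -r) (b := r) (by linarith)
    unfold periodization at h
    linarith
  · have h := integral_norm_periodization_le_sub hψ hθ (a := -r) (b := r) (by linarith)
      (by linarith)
    rw [show -r + 4 * r = 3 * r by ring] at h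
    unfold periodization at h
    linarith
end

section
/- Let D be a probability distribution on a domain X, f: X → ℝ measurable, ε > 0, and h: X × ℝ → [0,1] a function such that y ↦ h(x,y) is λ-Lipschitz for each fixed x. Then |E_{x∼D}[h(x, f(x))] − ∫_ℝ E_{x∼D}[h(x,y)·χ_y(f(x))] dy| ≤ (5/3)·λ·ε, where χ_y(t) = max{0, 1/ε − (1/ε)²·|t − y|} is the ε-soft indicator. -/
open MeasureTheory Set

/-- The ε-soft indicator χ_y. -/
noncomputable def softInd (ε y t : ℝ) : ℝ := max 0 (1/ε - (1/ε)^2 * |t - y|)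

/-!
The kernel `y ↦ χ_y(t)` depends only on `|t - y|` and vanishes once `|t - y| ≥ ε`, so its
moments reduce to `2 ∫₀^ε s^k (1/ε - s/ε²) ds = 2 ε^k / ((k+1)(k+2))`: it has mass `1` and
first absolute moment `ε/3`. Hence for a `K`-Lipschitz `g`,
`g t - ∫ g y χ_y(t) dy = ∫ (g t - g y) χ_y(t) dy` is at most `K ε / 3` in absolute value.
As `|h| ≤ 1` and the kernel has unit mass, Fubini swaps the two integrals, and averaging the
pointwise bound over `μ` gives `λ ε / 3 ≤ (5/3) λ ε`.
-/

open scoped NNReal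

section SoftIndicator

variable {ε : ℝ}

lemma softInd_eq_zero_of_le (hε : 0 < ε) {y t : ℝ} (h : ε ≤ |t - y|) :
    softInd ε y t = 0 := by
  refine max_eq_left ?_
  have : 1 / ε ≤ (1/ε)^2 * |t - y| := by
    calc 1 / ε = (1/ε)^2 * ε := by field_simp
      _ ≤ _ := by gcongr
  linarith

lemma softInd_eq_of_le (hε : 0 < ε) {y t : ℝ} (h : |t - y| ≤ ε) :
    softInd ε y t = 1/ε - (1/ε)^2 * |t - y| := by
  refine max_eq_right ?_
  have : (1/ε)^2 * |t - y| ≤ 1 / ε := by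
    calc (1/ε)^2 * |t - y| ≤ (1/ε)^2 * ε := by gcongr
      _ = 1 / ε := by field_simp
  linarith

lemma softInd_nonneg (ε y t : ℝ) : 0 ≤ softInd ε y t := le_max_left _ _

lemma continuous_softInd_left (ε t : ℝ) : Continuous fun y => softInd ε y t := by
  unfold softInd; fun_prop

lemma hasCompactSupport_softInd_left (hε : 0 < ε) (t : ℝ) :
    HasCompactSupport fun y => softInd ε y t := by
  refine HasCompactSupport.intro (isCompact_closedBall t ε) fun y hy => ?_
  rw [Metric.mem_closedBall, Real.dist_eq, abs_sub_comm, not_le] at hy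
  exact softInd_eq_zero_of_le hε hy.le

lemma integral_abs_pow_mul_softInd (hε : 0 < ε) (k : ℕ) (t : ℝ) :
    ∫ y, |t - y| ^ k * softInd ε y t = 2 * ε ^ k / ((k + 1) * (k + 2)) := by
  set G : ℝ → ℝ := fun s => s ^ k * softInd ε s 0
  have hvanish : ∀ s ∈ Ioi (0:ℝ) \ Ioc 0 ε, G s = 0 := fun s ⟨hs, hsε⟩ => by
    have hfar : ε ≤ |0 - s| := by
      rw [zero_sub, abs_neg, abs_of_pos hs]
      exact (not_le.mp fun h => hsε ⟨hs, h⟩).le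
    simp only [G, softInd_eq_zero_of_le hε hfar, mul_zero]
  have hpoly : EqOn G (fun s => s ^ k / ε - s ^ (k + 1) / ε ^ 2) (uIcc 0 ε) := fun s hs => by
    rw [uIcc_of_le hε.le] at hs
    have habs : |0 - s| = s := by rw [zero_sub, abs_neg, abs_of_nonneg hs.1]
    simp only [G, softInd_eq_of_le hε (habs.trans_le hs.2), habs]
    field_simp
    ring
  calc ∫ y, |t - y| ^ k * softInd ε y t = ∫ y, G |t - y| := by simp [G, softInd]
    _ = ∫ s, G |s| := integral_sub_left_eq_self (fun s => G |s|) volume t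
    _ = 2 * ∫ s in Ioi 0, G s := integral_comp_abs
    _ = 2 * ∫ s in (0)..ε, G s := by
      rw [setIntegral_eq_of_subset_of_forall_sdiff_eq_zero measurableSet_Ioi Ioc_subset_Ioi_self
        hvanish, intervalIntegral.integral_of_le hε.le]
    _ = 2 * ∫ s in (0)..ε, (s ^ k / ε - s ^ (k + 1) / ε ^ 2) := by
      rw [intervalIntegral.integral_congr hpoly]
    _ = _ := by
      rw [intervalIntegral.integral_sub (by simp) (by simp)]
      simp only [intervalIntegral.integral_div, integral_pow]
      field_simp
      push_cast
      ring

lemma integrable_softInd_left (hε : 0 < ε) (t : ℝ) : Integrable fun y => softInd ε y t :=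
  (continuous_softInd_left ε t).integrable_of_hasCompactSupport
    (hasCompactSupport_softInd_left hε t)

lemma integrable_mul_softInd {g : ℝ → ℝ} (hg : Continuous g) (hε : 0 < ε) (t : ℝ) :
    Integrable fun y => g y * softInd ε y t :=
  (hg.mul (continuous_softInd_left ε t)).integrable_of_hasCompactSupport
    (hasCompactSupport_softInd_left hε t).mul_left

lemma integral_softInd (hε : 0 < ε) (t : ℝ) : ∫ y, softInd ε y t = 1 := by
  simpa using integral_abs_pow_mul_softInd hε 0 t

lemma integral_abs_mul_softInd (hε : 0 < ε) (t : ℝ) :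
    ∫ y, |t - y| * softInd ε y t = ε / 3 := by
  have := integral_abs_pow_mul_softInd hε 1 t
  norm_num at this
  linarith

lemma abs_sub_integral_mul_softInd_le {g : ℝ → ℝ} {K : ℝ≥0} (hg : LipschitzWith K g)
    (hε : 0 < ε) (t : ℝ) : |g t - ∫ y, g y * softInd ε y t| ≤ K * (ε / 3) := by
  have hconst := integrable_mul_softInd (continuous_const (y := g t)) hε t
  have hint := integrable_mul_softInd hg.continuous hε t
  have hlip (y : ℝ) :
      |g t * softInd ε y t - g y * softInd ε y t| ≤ K * (|t - y| * softInd ε y t) := by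
    rw [← sub_mul, abs_mul, abs_of_nonneg (softInd_nonneg ε y t), ← mul_assoc]
    refine mul_le_mul_of_nonneg_right ?_ (softInd_nonneg ε y t)
    simpa [Real.dist_eq] using hg.dist_le_mul t y
  calc |g t - ∫ y, g y * softInd ε y t|
      = |∫ y, (g t * softInd ε y t - g y * softInd ε y t)| := by
        rw [integral_sub hconst hint, integral_const_mul, integral_softInd hε, mul_one]
    _ ≤ ∫ y, K * (|t - y| * softInd ε y t) :=
        abs_integral_le_integral_abs.trans <| integral_mono (hconst.sub hint).abs
          ((integrable_mul_softInd (by fun_prop) hε t).const_mul _) hlip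
    _ = K * (ε / 3) := by rw [integral_const_mul, integral_abs_mul_softInd hε]

end SoftIndicator

section Fubini

variable {ε : ℝ} {X : Type*} [MeasurableSpace X] {μ : Measure X} [IsFiniteMeasure μ]
  {f : X → ℝ}

lemma measurable_softInd_comp (hf : Measurable f) :
    Measurable fun p : X × ℝ => softInd ε p.2 (f p.1) := by
  unfold softInd; fun_prop

lemma integrable_prod_softInd (hf : Measurable f) (hε : 0 < ε) :
    Integrable (fun p : X × ℝ => softInd ε p.2 (f p.1)) (μ.prod volume) := by
  refine (integrable_prod_iff (measurable_softInd_comp hf).aestronglyMeasurable).2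
    ⟨.of_forall fun x => integrable_softInd_left hε (f x), ?_⟩
  simp only [Real.norm_eq_abs, abs_of_nonneg (softInd_nonneg _ _ _), integral_softInd hε]
  exact integrable_const 1

lemma integrable_prod_mul_softInd (hf : Measurable f) {h : X → ℝ → ℝ}
    (hmeas : Measurable (Function.uncurry h)) {C : ℝ} (hbound : ∀ x y, ‖h x y‖ ≤ C)
    (hε : 0 < ε) :
    Integrable (fun p : X × ℝ => h p.1 p.2 * softInd ε p.2 (f p.1)) (μ.prod volume) :=
  ((integrable_prod_softInd hf hε).const_mul C).mono'
    (hmeas.mul (measurable_softInd_comp hf)).aestronglyMeasurable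
    (.of_forall fun p => by
      rw [norm_mul, Real.norm_of_nonneg (softInd_nonneg _ _ _)]
      exact mul_le_mul_of_nonneg_right (hbound _ _) (softInd_nonneg _ _ _))

end Fubini

/-- Soft-indicator approximation of the expectation of a Lipschitz-in-y query. -/
theorem stmt_11 {X : Type*} [MeasurableSpace X] (μ : Measure X)
    [IsProbabilityMeasure μ] (f : X → ℝ) (hf : Measurable f)
    (h : X → ℝ → ℝ) (hmeas : Measurable (Function.uncurry h))
    (hrange : ∀ x y, h x y ∈ Icc (0:ℝ) 1) (lam : ℝ) (hlam : 0 ≤ lam)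
    (hlip : ∀ x, LipschitzWith (Real.toNNReal lam) (h x)) (ε : ℝ) (hε : 0 < ε) :
    |(∫ x, h x (f x) ∂μ) - ∫ y : ℝ, (∫ x, h x y * softInd ε y (f x) ∂μ)| ≤
      (5/3) * lam * ε := by
  have hbound (x y) : ‖h x y‖ ≤ 1 := by
    rw [Real.norm_of_nonneg (hrange x y).1]; exact (hrange x y).2
  have hprod := integrable_prod_mul_softInd (μ := μ) hf hmeas hbound hε
  have hdiag : Integrable (fun x => h x (f x)) μ :=
    .of_bound (hmeas.comp (measurable_id.prodMk hf)).aestronglyMeasurable 1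
      (.of_forall fun x => hbound x (f x))
  have hpointwise (x : X) :
      ‖h x (f x) - ∫ y, h x y * softInd ε y (f x)‖ ≤ lam * (ε / 3) := by
    simpa [Real.coe_toNNReal lam hlam] using abs_sub_integral_mul_softInd_le (hlip x) hε (f x)
  calc |(∫ x, h x (f x) ∂μ) - ∫ y, ∫ x, h x y * softInd ε y (f x) ∂μ|
      = ‖∫ x, (h x (f x) - ∫ y, h x y * softInd ε y (f x)) ∂μ‖ := by
        rw [← integral_integral_swap hprod, integral_sub hdiag hprod.integral_prod_left,
          Real.norm_eq_abs]
    _ ≤ lam * (ε / 3) := by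
        simpa using norm_integral_le_of_norm_le_const (μ := μ) (.of_forall hpointwise)
    _ ≤ (5/3) * lam * ε := by nlinarith
end
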